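/- arXiv:math/0407148 — 2 statements merged into one kernel-verified Lean document; each statement's English description precedes it below -/
import Mathlib

section
/- For every integer n > 2, the set of values (n−1)-affinity(f), as f ranges over all permutations of F_2^n, is exactly { 2^i − 2 : 1 ≤ i ≤ n+1 }. -/
open Module Set Function


/-- A `k`-flat in an `F`-vector space `V`: a coset of a `k`-dimensional `F`-subspace. -/
def IsFlat (F : Type*) {V : Type*} [Field F] [AddCommGroup V] [Module F V]
    (k : ℕ) (X : Set V) : Prop :=
  ∃ (U : Submodule F V) (x : V), Module.finrank F U = k ∧ X = (fun u => u + x) '' (U : Set V)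

/-- The `k`-affinity of a map `f : V → V`: the number of `k`-flats `X` of `V`
such that `f(X)` is also a `k`-flat. -/
noncomputable def affinity (F : Type*) {V : Type*} [Field F] [AddCommGroup V] [Module F V]
    (k : ℕ) (f : V → V) : ℕ :=
  {X : Set V | IsFlat F k X ∧ IsFlat F k (f '' X)}.ncard


abbrev F2 := ZMod 2

section Abstract
variable {V : Type*} [AddCommGroup V] [Module F2 V]

lemma two_cases (c : F2) : c = 0 ∨ c = 1 := by revert c; decide

lemma two_ne (c d : F2) (h : c ≠ d) : c = d + 1 := by revert c d; decide

/-- the coset of a kernel as a preimage -/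
lemma coset_eq_preimage (φ : V →ₗ[F2] F2) (x : V) :
    (fun u => u + x) '' ((LinearMap.ker φ : Submodule F2 V) : Set V) = φ ⁻¹' {φ x} := by
  ext y
  simp only [Set.mem_image, SetLike.mem_coe, LinearMap.mem_ker, Set.mem_preimage,
    Set.mem_singleton_iff]
  constructor
  · rintro ⟨u, hu, rfl⟩; simp [hu]
  · intro h
    exact ⟨y - x, by simp [h], by abel⟩

lemma surj_of_ne_zero {φ : V →ₗ[F2] F2} (hφ : φ ≠ 0) (c : F2) : ∃ x, φ x = c := by
  obtain ⟨v, hv⟩ : ∃ v, φ v ≠ 0 := by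
    by_contra h
    push_neg at h
    exact hφ (by ext v; simp [h v])
  have hv1 : φ v = 1 := (two_cases (φ v)).resolve_left hv
  exact ⟨c • v, by simp [hv1, mul_comm]⟩

lemma flatChar [FiniteDimensional F2 V] (hN : finrank F2 V ≠ 0) (X : Set V) :
    IsFlat F2 (finrank F2 V - 1) X ↔
      ∃ φ : V →ₗ[F2] F2, φ ≠ 0 ∧ ∃ c, X = φ ⁻¹' {c} := by
  constructor
  · rintro ⟨U, x, hU, rfl⟩
    have hq : finrank F2 (V ⧸ U) = 1 := by
      have h1 := U.finrank_quotient_add_finrank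
      have h2 : finrank F2 U ≤ finrank F2 V := U.finrank_le
      omega
    obtain ⟨b⟩ := (finrank_eq_one_iff (Fin 1)).1 hq
    let e : (V ⧸ U) ≃ₗ[F2] F2 := b.equivFun.trans (LinearEquiv.funUnique (Fin 1) F2 F2)
    let φ : V →ₗ[F2] F2 := (e : (V ⧸ U) →ₗ[F2] F2) ∘ₗ U.mkQ
    have hker : LinearMap.ker φ = U := by
      ext v
      simp only [φ, LinearMap.mem_ker, LinearMap.comp_apply, LinearEquiv.coe_coe,
        EmbeddingLike.map_eq_zero_iff]
      rw [← LinearMap.mem_ker, Submodule.ker_mkQ]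
    have hφ : φ ≠ 0 := by
      intro h0
      have : U = ⊤ := by
        rw [← hker, h0]; exact LinearMap.ker_zero
      rw [this, finrank_top] at hU
      omega
    exact ⟨φ, hφ, φ x, by rw [← hker, coset_eq_preimage]⟩
  · rintro ⟨φ, hφ, c, rfl⟩
    have hsurj : Surjective φ := by
      intro c; exact surj_of_ne_zero hφ c
    obtain ⟨x, hx⟩ := surj_of_ne_zero hφ c
    refine ⟨LinearMap.ker φ, x, ?_, by rw [coset_eq_preimage, hx]⟩
    have h1 := LinearMap.finrank_range_add_finrank_ker φ
    have h2 : LinearMap.range φ = ⊤ := LinearMap.range_eq_top.2 hsurj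
    rw [h2, finrank_top, finrank_self] at h1
    omega

lemma preimage_eq_iff {φ ψ : V →ₗ[F2] F2} (hφ : φ ≠ 0) {c d : F2}
    (h : φ ⁻¹' {c} = ψ ⁻¹' {d}) : φ = ψ ∧ c = d := by
  have key : ∀ y, φ y = c ↔ ψ y = d := fun y => by
    have : (y ∈ φ ⁻¹' {c}) ↔ y ∈ ψ ⁻¹' {d} := by rw [h]
    simpa using this
  -- ∀ y, φ y + d = ψ y + c
  have key2 : ∀ y, φ y + d = ψ y + c := by
    intro y
    by_cases hy : φ y = c
    · rw [hy, (key y).1 hy]; ring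
    · have h1 : φ y = c + 1 := two_ne _ _ hy
      have h2 : ψ y ≠ d := fun hc => hy ((key y).2 hc)
      have h3 : ψ y = d + 1 := two_ne _ _ h2
      rw [h1, h3]; ring
  have hcd : c = d := by have := key2 0; simpa using this.symm
  subst hcd
  refine ⟨?_, rfl⟩
  ext y
  have := key2 y
  exact add_right_cancel this

/-- `P f φ` : direction `φ` is sent to a direction by `f`. -/
def P (f : V → V) (φ : V →ₗ[F2] F2) : Prop :=
  ∃ ψ : V →ₗ[F2] F2, ψ ≠ 0 ∧ ∃ e : F2, ∀ x, ψ (f x) = φ x + e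

lemma P.ne_zero {f : V → V} (hf : Surjective f) {φ} (h : P f φ) : φ ≠ 0 := by
  rintro rfl
  obtain ⟨ψ, hψ, e, he⟩ := h
  have : ∀ y, ψ y = e := fun y => by obtain ⟨x, rfl⟩ := hf y; simpa using he x
  have he0 : e = 0 := by have := this 0; simpa using this.symm
  exact hψ (by ext y; simp [this y, he0])

lemma image_flat_iff [FiniteDimensional F2 V] (hN : finrank F2 V ≠ 0) {f : V → V} (hf : Bijective f) {φ : V →ₗ[F2] F2} (hφ : φ ≠ 0) (c : F2) :
    IsFlat F2 (finrank F2 V - 1) (f '' (φ ⁻¹' {c})) ↔ P f φ := by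
  constructor
  · intro h
    obtain ⟨ψ, hψ, d, hd⟩ := (flatChar hN _).1 h
    refine ⟨ψ, hψ, d - c, fun x => ?_⟩
    by_cases hx : φ x = c
    · have : f x ∈ ψ ⁻¹' {d} := hd ▸ ⟨x, by simpa using hx, rfl⟩
      simp only [Set.mem_preimage, Set.mem_singleton_iff] at this
      rw [this, hx]; ring
    · have hx1 : φ x = c + 1 := two_ne _ _ hx
      have : f x ∉ ψ ⁻¹' {d} := by
        rw [← hd]
        rintro ⟨x', hx', hfx⟩
        cases hf.1 hfx
        exact hx (by simpa using hx')
      simp only [Set.mem_preimage, Set.mem_singleton_iff] at this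
      have : ψ (f x) = d + 1 := two_ne _ _ this
      rw [this, hx1]; ring
  · rintro ⟨ψ, hψ, e, he⟩
    rw [flatChar hN]
    refine ⟨ψ, hψ, c + e, ?_⟩
    ext y
    constructor
    · rintro ⟨x, hx, rfl⟩
      simp only [Set.mem_preimage, Set.mem_singleton_iff] at hx ⊢
      rw [he x, hx]
    · intro hy
      simp only [Set.mem_preimage, Set.mem_singleton_iff] at hy
      obtain ⟨x, rfl⟩ := hf.2 y
      refine ⟨x, ?_, rfl⟩
      simp only [Set.mem_preimage, Set.mem_singleton_iff]
      have := he x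
      rw [hy] at this
      have h2 := this.symm
      -- c + e = φ x + e
      exact add_right_cancel h2

end Abstract

section Count
variable {V : Type*} [AddCommGroup V] [Module F2 V] [FiniteDimensional F2 V]

/-- number of directions preserved -/
noncomputable def cnt (f : V → V) : ℕ := Nat.card {φ : V →ₗ[F2] F2 // P f φ}

lemma affinity_eq (hN : finrank F2 V ≠ 0) {f : V → V} (hf : Bijective f) :
    affinity F2 (finrank F2 V - 1) f = 2 * cnt f := by
  classical
  have e : ({φ : V →ₗ[F2] F2 // P f φ} × F2) ≃
      {X : Set V // IsFlat F2 (finrank F2 V - 1) X ∧ IsFlat F2 (finrank F2 V - 1) (f '' X)} := by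
    refine Equiv.ofBijective
      (fun p => ⟨(p.1.1 : V →ₗ[F2] F2) ⁻¹' {p.2},
        (flatChar hN _).2 ⟨p.1.1, p.1.2.ne_zero hf.2, p.2, rfl⟩,
        (image_flat_iff hN hf (p.1.2.ne_zero hf.2) p.2).2 p.1.2⟩) ⟨?_, ?_⟩
    · rintro ⟨⟨φ, hφ⟩, c⟩ ⟨⟨ψ, hψ⟩, d⟩ h
      simp only [Subtype.mk_eq_mk] at h
      obtain ⟨h1, h2⟩ := preimage_eq_iff (hφ.ne_zero hf.2) h
      simp [Prod.ext_iff, Subtype.ext_iff, h1, h2]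
    · rintro ⟨X, hX, hfX⟩
      obtain ⟨φ, hφ, c, rfl⟩ := (flatChar hN _).1 hX
      exact ⟨⟨⟨φ, (image_flat_iff hN hf hφ c).1 hfX⟩, c⟩, rfl⟩
  have := Nat.card_congr e
  rw [Nat.card_prod] at this
  unfold affinity cnt
  rw [← Nat.card_coe_set_eq]
  have hF2 : Nat.card F2 = 2 := by simp [Nat.card_eq_fintype_card]
  rw [hF2] at this
  simpa [Set.coe_setOf, mul_comm] using this.symm

lemma cnt_eq_pow {f : V → V} (hf : Bijective f) :
    ∃ d ≤ finrank F2 V, cnt f = 2 ^ d - 1 := by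
  classical
  let S : Submodule F2 (V →ₗ[F2] F2) :=
    { carrier := {φ | P f φ ∨ φ = 0}
      add_mem' := by
        rintro φ₁ φ₂ (⟨ψ₁, hψ₁, e₁, he₁⟩ | rfl) (⟨ψ₂, hψ₂, e₂, he₂⟩ | rfl)
        · by_cases h0 : φ₁ + φ₂ = 0
          · exact Or.inr h0
          · refine Or.inl ⟨ψ₁ + ψ₂, ?_, e₁ + e₂, fun x => by
              simp only [LinearMap.add_apply, he₁ x, he₂ x]; ring⟩
            intro hc
            apply h0
            have key : ∀ x, φ₁ x + φ₂ x + (e₁ + e₂) = 0 := fun x => by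
              have h3 : ψ₁ (f x) + ψ₂ (f x) = 0 := by
                have := congrArg (fun g => g (f x)) hc
                simpa using this
              rw [he₁ x, he₂ x] at h3
              linear_combination h3
            have he0 : e₁ + e₂ = 0 := by have := key 0; simpa using this
            ext x
            have := key x
            rw [he0, add_zero] at this
            simpa using this
        · simpa using Or.inl ⟨ψ₁, hψ₁, e₁, he₁⟩
        · simpa using Or.inl ⟨ψ₂, hψ₂, e₂, he₂⟩
        · simp
      zero_mem' := Or.inr rfl
      smul_mem' := by
        intro c φ hφ
        rcases two_cases c with rfl | rfl
        · simp
        · simpa using hφ }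
  haveI : Finite (V →ₗ[F2] F2) := Module.finite_of_finite F2
  haveI : Finite S := Subtype.finite
  refine ⟨finrank F2 S, ?_, ?_⟩
  · calc finrank F2 S ≤ finrank F2 (V →ₗ[F2] F2) := S.finrank_le
      _ = finrank F2 V := Subspace.dual_finrank_eq
  · have hmem : ∀ φ, P f φ ↔ φ ∈ ((S : Set (V →ₗ[F2] F2)) \ {0}) := fun φ => by
      constructor
      · exact fun h => ⟨Or.inl h, by simpa using h.ne_zero hf.2⟩
      · rintro ⟨h | rfl, hne⟩
        · exact h
        · simp at hne
    have e1 : {φ : V →ₗ[F2] F2 // P f φ} ≃ ↥((S : Set (V →ₗ[F2] F2)) \ {0}) :=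
      Equiv.subtypeEquivRight hmem
    have hcardS : Nat.card S = 2 ^ finrank F2 S := by
      letI : Fintype S := Fintype.ofFinite _
      rw [Nat.card_eq_fintype_card, card_eq_pow_finrank (K := F2)]
      simp
    have h0S : (0 : V →ₗ[F2] F2) ∈ (S : Set (V →ₗ[F2] F2)) := S.zero_mem
    unfold cnt
    rw [Nat.card_congr e1, Nat.card_coe_set_eq,
      Set.ncard_diff_singleton_of_mem h0S, ← Nat.card_coe_set_eq]
    rw [show Nat.card ↥(S : Set (V →ₗ[F2] F2)) = Nat.card S from rfl, hcardS]

end Count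

section Transport
variable {V W : Type*} [AddCommGroup V] [Module F2 V] [AddCommGroup W] [Module F2 W]

lemma comp_ne_zero (L : V ≃ₗ[F2] W) {φ : W →ₗ[F2] F2} :
    φ ∘ₗ (L : V →ₗ[F2] W) = 0 ↔ φ = 0 := by
  constructor
  · intro h
    ext w
    have := congrArg (fun g => g (L.symm w)) h
    simpa using this
  · rintro rfl; ext; simp

lemma P_conj (L : V ≃ₗ[F2] W) (f : V → V) (φ : W →ₗ[F2] F2) :
    P (⇑L ∘ f ∘ ⇑L.symm) φ ↔ P f (φ ∘ₗ (L : V →ₗ[F2] W)) := by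
  constructor
  · rintro ⟨ψ, hψ, e, he⟩
    refine ⟨ψ ∘ₗ (L : V →ₗ[F2] W), fun h => hψ ((comp_ne_zero L).1 h), e, fun y => ?_⟩
    have := he (L y)
    simpa using this
  · rintro ⟨ψ, hψ, e, he⟩
    refine ⟨ψ ∘ₗ (L.symm : W →ₗ[F2] V), fun h => hψ ((comp_ne_zero L.symm).1 h), e, fun x => ?_⟩
    have := he (L.symm x)
    simpa using this

lemma cnt_conj (L : V ≃ₗ[F2] W) (f : V → V) :
    cnt (⇑L ∘ f ∘ ⇑L.symm) = cnt f := by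
  apply Nat.card_congr
  refine ⟨fun φ => ⟨φ.1 ∘ₗ (L : V →ₗ[F2] W), (P_conj L f φ.1).1 φ.2⟩,
    fun φ => ⟨φ.1 ∘ₗ (L.symm : W →ₗ[F2] V), (P_conj L f _).2 ?_⟩, ?_, ?_⟩
  · have : (φ.1 ∘ₗ (L.symm : W →ₗ[F2] V)) ∘ₗ (L : V →ₗ[F2] W) = φ.1 := by ext x; simp
    rw [this]; exact φ.2
  · rintro ⟨φ, hφ⟩; ext x; simp
  · rintro ⟨φ, hφ⟩; ext x; simp

/-- `P` or zero -/
def Pz (f : V → V) (φ : V →ₗ[F2] F2) : Prop := P f φ ∨ φ = 0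

lemma Pz_of_forall {f : V → V} {φ ψ : V →ₗ[F2] F2} {e : F2}
    (he : ∀ x, ψ (f x) = φ x + e) : Pz f φ := by
  by_cases hψ : ψ = 0
  · right
    have key : ∀ x, φ x + e = 0 := fun x => by
      have := he x; rw [hψ] at this; simpa using this.symm
    have he0 : e = 0 := by have := key 0; simpa using this
    ext x
    have := key x
    rw [he0, add_zero] at this
    simpa using this
  · exact Or.inl ⟨ψ, hψ, e, he⟩

lemma lin_prod_apply (φ : V × W →ₗ[F2] F2) (x : V) (y : W) :
    φ (x, y) = φ ((x, 0) : V × W) + φ ((0, y) : V × W) := by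
  rw [← map_add]
  norm_num

lemma P_prod {f : V → V} {g : W → W} (hf : Surjective f) (hg : Surjective g)
    (φ : V × W →ₗ[F2] F2) :
    P (Prod.map f g) φ ↔
      (Pz f (φ ∘ₗ LinearMap.inl F2 V W) ∧ Pz g (φ ∘ₗ LinearMap.inr F2 V W) ∧ φ ≠ 0) := by
  constructor
  · rintro h
    have hne0 := h.ne_zero (hf.prodMap hg)
    obtain ⟨ψ, hψ, e, he⟩ := h
    have key : ∀ x y, ψ ((f x, 0) : V × W) + ψ ((0, g y) : V × W)
        = φ ((x, 0) : V × W) + φ ((0, y) : V × W) + e := fun x y => by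
      have := he (x, y)
      rw [Prod.map_apply] at this
      rw [← lin_prod_apply, ← lin_prod_apply]
      exact this
    refine ⟨?_, ?_, hne0⟩
    · refine Pz_of_forall (ψ := ψ ∘ₗ LinearMap.inl F2 V W) (e := e - ψ ((0, g 0) : V × W))
        (fun x => ?_)
      have := key x 0
      simp only [LinearMap.comp_apply, LinearMap.inl_apply]
      rw [show φ ((0,(0:W)) : V × W) = 0 from map_zero φ] at this
      linear_combination this
    · refine Pz_of_forall (ψ := ψ ∘ₗ LinearMap.inr F2 V W) (e := e - ψ ((f 0, 0) : V × W))
        (fun y => ?_)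
      have := key 0 y
      simp only [LinearMap.comp_apply, LinearMap.inr_apply]
      rw [show φ (((0:V),0) : V × W) = 0 from map_zero φ] at this
      linear_combination this
  · rintro ⟨h1, h2, hne⟩
    have hd : ∀ (α : V →ₗ[F2] F2), Pz f α → ∃ (ψ : V →ₗ[F2] F2) (e : F2), (α ≠ 0 → ψ ≠ 0) ∧ ∀ x, ψ (f x) = α x + e := by
      rintro α (⟨ψ, hψ, e, he⟩ | rfl)
      · exact ⟨ψ, e, fun _ => hψ, he⟩
      · exact ⟨0, 0, fun h => absurd rfl h, fun x => by simp⟩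
    have hd' : ∀ (β : W →ₗ[F2] F2), Pz g β → ∃ (ψ : W →ₗ[F2] F2) (e : F2), (β ≠ 0 → ψ ≠ 0) ∧ ∀ y, ψ (g y) = β y + e := by
      rintro β (⟨ψ, hψ, e, he⟩ | rfl)
      · exact ⟨ψ, e, fun _ => hψ, he⟩
      · exact ⟨0, 0, fun h => absurd rfl h, fun y => by simp⟩
    obtain ⟨ψ₁, e₁, hψ₁, he₁⟩ := hd _ h1
    obtain ⟨ψ₂, e₂, hψ₂, he₂⟩ := hd' _ h2
    refine ⟨ψ₁ ∘ₗ LinearMap.fst F2 V W + ψ₂ ∘ₗ LinearMap.snd F2 V W, ?_, e₁ + e₂, ?_⟩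
    · -- ψ ≠ 0
      have hor : φ ∘ₗ LinearMap.inl F2 V W ≠ 0 ∨ φ ∘ₗ LinearMap.inr F2 V W ≠ 0 := by
        by_contra hc
        push_neg at hc
        apply hne
        apply LinearMap.ext
        rintro ⟨x, y⟩
        rw [lin_prod_apply]
        have c1 := congrArg (fun h => h x) hc.1
        have c2 := congrArg (fun h => h y) hc.2
        simpa using by
          simp only [LinearMap.comp_apply, LinearMap.inl_apply, LinearMap.inr_apply,
            LinearMap.zero_apply] at c1 c2
          rw [c1, c2]; simp
      intro hc
      rcases hor with h | h
      · apply hψ₁ h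
        ext x
        have := congrArg (fun h => h ((x, 0) : V × W)) hc
        simpa using this
      · apply hψ₂ h
        ext y
        have := congrArg (fun h => h ((0, y) : V × W)) hc
        simpa using this
    · rintro ⟨x, y⟩
      simp only [LinearMap.add_apply, LinearMap.comp_apply, LinearMap.fst_apply,
        LinearMap.snd_apply, Prod.map_apply]
      rw [he₁ x, he₂ y, lin_prod_apply φ x y]
      simp only [LinearMap.comp_apply, LinearMap.inl_apply, LinearMap.inr_apply]
      ring

end Transport

section ProdCount
variable {V W : Type*} [AddCommGroup V] [Module F2 V] [AddCommGroup W] [Module F2 W]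
  [FiniteDimensional F2 V] [FiniteDimensional F2 W]

noncomputable def cnt1 (f : V → V) : ℕ := Nat.card {φ : V →ₗ[F2] F2 // Pz f φ}

lemma cnt1_eq {f : V → V} (hf : Surjective f) : cnt1 f = cnt f + 1 := by
  classical
  haveI : Finite (V →ₗ[F2] F2) := Module.finite_of_finite F2
  have hdisj : Disjoint (P f) (fun φ : V →ₗ[F2] F2 => φ = 0) := by
    rw [Pi.disjoint_iff]
    intro φ
    by_cases h : P f φ
    · simp only [h]
      have := h.ne_zero hf
      intro hP
      simp [Prop.disjoint_iff] at *
      tauto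
    · simp [Prop.disjoint_iff]
      tauto
  have e := subtypeOrEquiv (P f) (fun φ : V →ₗ[F2] F2 => φ = 0) hdisj
  unfold cnt1 cnt Pz
  rw [Nat.card_congr e, Nat.card_sum]
  congr 1
  haveI : Unique {φ : V →ₗ[F2] F2 // φ = 0} :=
    ⟨⟨⟨0, rfl⟩⟩, by rintro ⟨φ, rfl⟩; rfl⟩
  exact Nat.card_unique

lemma cnt1_prod {f : V → V} {g : W → W} (hf : Surjective f) (hg : Surjective g) :
    cnt1 (Prod.map f g) = cnt1 f * cnt1 g := by
  classical
  have hPz : ∀ φ : V × W →ₗ[F2] F2, Pz (Prod.map f g) φ ↔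
      (Pz f (φ ∘ₗ LinearMap.inl F2 V W) ∧ Pz g (φ ∘ₗ LinearMap.inr F2 V W)) := by
    intro φ
    constructor
    · rintro (h | rfl)
      · obtain ⟨h1, h2, _⟩ := (P_prod hf hg φ).1 h
        exact ⟨h1, h2⟩
      · exact ⟨Or.inr (by ext; simp), Or.inr (by ext; simp)⟩
    · rintro ⟨h1, h2⟩
      by_cases hφ : φ = 0
      · exact Or.inr hφ
      · exact Or.inl ((P_prod hf hg φ).2 ⟨h1, h2, hφ⟩)
  have E := Module.dualProdDualEquivDual F2 V W
  have hE : ∀ (α : V →ₗ[F2] F2) (β : W →ₗ[F2] F2),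
      ((Module.dualProdDualEquivDual F2 V W) (α, β)) ∘ₗ LinearMap.inl F2 V W = α ∧
      ((Module.dualProdDualEquivDual F2 V W) (α, β)) ∘ₗ LinearMap.inr F2 V W = β := by
    intro α β
    constructor <;> ext v <;>
      simp [Module.dualProdDualEquivDual_apply]
  have e1 : {p : (V →ₗ[F2] F2) × (W →ₗ[F2] F2) // Pz f p.1 ∧ Pz g p.2} ≃
      {φ : V × W →ₗ[F2] F2 // Pz (Prod.map f g) φ} := by
    refine Equiv.subtypeEquiv (Module.dualProdDualEquivDual F2 V W).toEquiv (fun p => ?_)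
    rw [hPz]
    obtain ⟨α, β⟩ := p
    simp only [LinearEquiv.coe_toEquiv]
    rw [(hE α β).1, (hE α β).2]
  have e2 : {p : (V →ₗ[F2] F2) × (W →ₗ[F2] F2) // Pz f p.1 ∧ Pz g p.2} ≃
      {α : V →ₗ[F2] F2 // Pz f α} × {β : W →ₗ[F2] F2 // Pz g β} :=
    Equiv.subtypeProdEquivProd
  unfold cnt1
  rw [← Nat.card_congr e1, Nat.card_congr e2, Nat.card_prod]

end ProdCount

section Concrete
variable {m : ℕ}

def dotF (a x : Fin m → F2) : F2 := ∑ i, a i * x i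

noncomputable def dotL (a : Fin m → F2) : (Fin m → F2) →ₗ[F2] F2 :=
  ∑ i, a i • (LinearMap.proj i : (Fin m → F2) →ₗ[F2] F2)

lemma dotL_apply (a x : Fin m → F2) : dotL a x = dotF a x := by
  simp [dotL, dotF]

lemma dotL_surj (φ : (Fin m → F2) →ₗ[F2] F2) : ∃ a, dotL a = φ := by
  refine ⟨fun i => φ (Pi.single i 1), LinearMap.ext fun x => ?_⟩
  rw [dotL_apply, dotF, LinearMap.pi_apply_eq_sum_univ φ x]
  apply Finset.sum_congr rfl
  intro i _
  simp [mul_comm]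
  exact Or.inl (congrArg φ (funext fun j => by simp [Pi.single_apply, eq_comm]))

lemma dotL_inj : Function.Injective (dotL (m := m)) := by
  intro a b h
  funext i
  have := congrArg (fun φ => φ (Pi.single i 1)) h
  simpa [dotL_apply, dotF, Pi.single_apply] using this

def P' (f : (Fin m → F2) → (Fin m → F2)) (a : Fin m → F2) : Prop :=
  ∃ b, b ≠ 0 ∧ ∃ e, ∀ x, dotF b (f x) = dotF a x + e

lemma P_dotL_iff (f : (Fin m → F2) → (Fin m → F2)) (a : Fin m → F2) :
    P f (dotL a) ↔ P' f a := by
  constructor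
  · rintro ⟨ψ, hψ, e, he⟩
    obtain ⟨b, rfl⟩ := dotL_surj ψ
    refine ⟨b, fun h => hψ (by rw [h]; exact LinearMap.ext fun x => by simp [dotL_apply, dotF]), e, fun x => ?_⟩
    rw [← dotL_apply, ← dotL_apply]; exact he x
  · rintro ⟨b, hb, e, he⟩
    refine ⟨dotL b, fun h => hb ?_, e, fun x => by rw [dotL_apply, dotL_apply]; exact he x⟩
    have : dotL b = dotL (0 : Fin m → F2) := by
      rw [h]; exact LinearMap.ext fun x => by simp [dotL_apply, dotF]
    exact dotL_inj this

lemma cnt_eq_card (f : (Fin m → F2) → (Fin m → F2)) [DecidablePred (P' f)] :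
    cnt f = (Finset.univ.filter (P' f)).card := by
  have e : {φ : (Fin m → F2) →ₗ[F2] F2 // P f φ} ≃ {a : Fin m → F2 // P' f a} := by
    refine Equiv.symm (Equiv.subtypeEquiv (Equiv.ofBijective dotL ⟨dotL_inj, fun φ => dotL_surj φ⟩) ?_)
    intro a
    show P' f a ↔ P f (dotL a)
    exact (P_dotL_iff f a).symm
  unfold cnt
  rw [Nat.card_congr e, Nat.card_eq_fintype_card, Fintype.card_subtype]

end Concrete

section Gadgets

instance {m : ℕ} (f : (Fin m → F2) → (Fin m → F2)) : DecidablePred (P' f) := fun a => by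
  unfold P'; infer_instance

def g3aT : Fin 8 → Fin 8 := ![6,1,4,5,3,0,2,7]
def g3aTi : Fin 8 → Fin 8 := ![5,1,6,4,2,3,0,7]
def g3aP : Equiv.Perm (Fin 8) := ⟨g3aT, g3aTi, by decide, by decide⟩
def g3a : Equiv.Perm (Fin 3 → F2) :=
  ((finFunctionFinEquiv : (Fin 3 → F2) ≃ Fin 8).trans g3aP).trans
    (finFunctionFinEquiv : (Fin 3 → F2) ≃ Fin 8).symm

def g3bT : Fin 8 → Fin 8 := ![3,6,1,5,7,0,4,2]
def g3bTi : Fin 8 → Fin 8 := ![5,2,7,0,6,3,1,4]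
def g3bP : Equiv.Perm (Fin 8) := ⟨g3bT, g3bTi, by decide, by decide⟩
def g3b : Equiv.Perm (Fin 3 → F2) :=
  ((finFunctionFinEquiv : (Fin 3 → F2) ≃ Fin 8).trans g3bP).trans
    (finFunctionFinEquiv : (Fin 3 → F2) ≃ Fin 8).symm

def g3cT : Fin 8 → Fin 8 := ![6,0,2,4,3,5,1,7]
def g3cTi : Fin 8 → Fin 8 := ![1,6,2,4,3,5,0,7]
def g3cP : Equiv.Perm (Fin 8) := ⟨g3cT, g3cTi, by decide, by decide⟩
def g3c : Equiv.Perm (Fin 3 → F2) :=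
  ((finFunctionFinEquiv : (Fin 3 → F2) ≃ Fin 8).trans g3cP).trans
    (finFunctionFinEquiv : (Fin 3 → F2) ≃ Fin 8).symm

def g4aT : Fin 16 → Fin 16 := ![0,2,13,3,4,14,6,9,7,1,5,10,12,15,8,11]
def g4aTi : Fin 16 → Fin 16 := ![0,9,1,3,4,10,6,8,14,7,11,15,12,2,5,13]
def g4aP : Equiv.Perm (Fin 16) := ⟨g4aT, g4aTi, by decide, by decide⟩
def g4a : Equiv.Perm (Fin 4 → F2) :=
  ((finFunctionFinEquiv : (Fin 4 → F2) ≃ Fin 16).trans g4aP).trans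
    (finFunctionFinEquiv : (Fin 4 → F2) ≃ Fin 16).symm

def g5aT : Fin 32 → Fin 32 := ![14,11,2,29,13,10,3,17,4,30,23,28,27,8,26,24,6,0,7,16,21,5,20,12,25,18,19,22,9,31,15,1]
def g5aTi : Fin 32 → Fin 32 := ![17,31,2,6,8,21,16,18,13,28,5,1,23,4,0,30,19,7,25,26,22,20,27,10,15,24,14,12,11,3,9,29]
def g5aP : Equiv.Perm (Fin 32) := ⟨g5aT, g5aTi, by decide, by decide⟩
def g5a : Equiv.Perm (Fin 5 → F2) :=
  ((finFunctionFinEquiv : (Fin 5 → F2) ≃ Fin 32).trans g5aP).trans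
    (finFunctionFinEquiv : (Fin 5 → F2) ≃ Fin 32).symm

set_option maxRecDepth 100000

lemma cnt_g3a : cnt ⇑g3a = 0 := by rw [cnt_eq_card]; decide
lemma cnt_g3b : cnt ⇑g3b = 1 := by rw [cnt_eq_card]; decide
lemma cnt_g3c : cnt ⇑g3c = 3 := by rw [cnt_eq_card]; decide
lemma cnt_g4a : cnt ⇑g4a = 0 := by rw [cnt_eq_card]; decide
lemma cnt_g5a : cnt ⇑g5a = 0 := by rw [cnt_eq_card]; decide

end Gadgets

section Assemble

/-- split linear equivalence -/
noncomputable def splitL (a b : ℕ) : (Fin (a+b) → F2) ≃ₗ[F2] (Fin a → F2) × (Fin b → F2) :=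
  (LinearEquiv.funCongrLeft F2 F2 finSumFinEquiv).trans
    (LinearEquiv.sumArrowLequivProdArrow _ _ F2 F2)

lemma cnt_id_pow (d : ℕ) : cnt ⇑(Equiv.refl (Fin d → F2)) + 1 = 2 ^ d := by
  have hs : Surjective (⇑(Equiv.refl (Fin d → F2))) := (Equiv.refl _).surjective
  rw [← cnt1_eq hs]
  haveI : Finite ((Fin d → F2) →ₗ[F2] F2) := Module.finite_of_finite F2
  have hall : ∀ φ : (Fin d → F2) →ₗ[F2] F2, Pz (⇑(Equiv.refl (Fin d → F2))) φ := by
    intro φ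
    by_cases h : φ = 0
    · exact Or.inr h
    · exact Or.inl ⟨φ, h, 0, fun x => by simp⟩
  have e : {φ : (Fin d → F2) →ₗ[F2] F2 // Pz (⇑(Equiv.refl (Fin d → F2))) φ} ≃
      ((Fin d → F2) →ₗ[F2] F2) := Equiv.subtypeUnivEquiv hall
  unfold cnt1
  rw [Nat.card_congr e]
  letI : Fintype ((Fin d → F2) →ₗ[F2] F2) := Fintype.ofFinite _
  rw [Nat.card_eq_fintype_card, card_eq_pow_finrank (K := F2)]
  have : finrank F2 ((Fin d → F2) →ₗ[F2] F2) = d :=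
    (Subspace.dual_finrank_eq (K := F2) (V := Fin d → F2)).trans (Module.finrank_fin_fun F2)
  rw [this]
  simp

lemma cnt_comb {a b : ℕ} (f : Equiv.Perm (Fin a → F2)) (g : Equiv.Perm (Fin b → F2)) :
    ∃ h : Equiv.Perm (Fin (a+b) → F2), cnt ⇑h + 1 = (cnt ⇑f + 1) * (cnt ⇑g + 1) := by
  classical
  set L : ((Fin a → F2) × (Fin b → F2)) ≃ₗ[F2] (Fin (a+b) → F2) := (splitL a b).symm
  refine ⟨((L.symm.toEquiv).trans ((f.prodCongr g).trans L.toEquiv)), ?_⟩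
  have hco : ⇑((L.symm.toEquiv).trans ((f.prodCongr g).trans L.toEquiv))
      = ⇑L ∘ (Prod.map ⇑f ⇑g) ∘ ⇑L.symm := by
    funext x
    simp [Equiv.prodCongr_apply]
  rw [hco, cnt_conj L (Prod.map ⇑f ⇑g)]
  rw [← cnt1_eq (f.surjective.prodMap g.surjective), ← cnt1_eq f.surjective,
    ← cnt1_eq g.surjective]
  exact cnt1_prod f.surjective g.surjective

lemma exists_cnt0 : ∀ m, 3 ≤ m → ∃ f : Equiv.Perm (Fin m → F2), cnt ⇑f + 1 = 1 := by
  intro m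
  induction m using Nat.strong_induction_on with
  | _ m ih =>
    intro hm
    by_cases h6 : 6 ≤ m
    · obtain ⟨s, rfl⟩ : ∃ s, m = 3 + s := ⟨m - 3, by omega⟩
      obtain ⟨g, hg⟩ := ih s (by omega) (by omega)
      obtain ⟨h, hh⟩ := cnt_comb g3a g
      exact ⟨h, by rw [hh, cnt_g3a, hg]⟩
    · interval_cases m
      · exact ⟨g3a, by rw [cnt_g3a]⟩
      · exact ⟨g4a, by rw [cnt_g4a]⟩
      · exact ⟨g5a, by rw [cnt_g5a]⟩

lemma exists_cnt_pow (n d : ℕ) (hn : 3 ≤ n) (hd : d ≤ n) :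
    ∃ f : Equiv.Perm (Fin n → F2), cnt ⇑f + 1 = 2 ^ d := by
  by_cases hdn : d = n
  · subst hdn
    exact ⟨Equiv.refl _, cnt_id_pow d⟩
  · by_cases h3 : d + 3 ≤ n
    · obtain ⟨k, rfl⟩ : ∃ k, n = k + d := ⟨n - d, by omega⟩
      obtain ⟨g, hg⟩ := exists_cnt0 k (by omega)
      obtain ⟨h, hh⟩ := cnt_comb g (Equiv.refl (Fin d → F2))
      exact ⟨h, by rw [hh, hg, cnt_id_pow, one_mul]⟩
    · -- d = n-1 or n-2
      obtain ⟨s, rfl⟩ : ∃ s, n = 3 + s := ⟨n - 3, by omega⟩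
      have hds : d = 1 + s ∨ d = 2 + s := by omega
      rcases hds with rfl | rfl
      · obtain ⟨h, hh⟩ := cnt_comb g3b (Equiv.refl (Fin s → F2))
        refine ⟨h, ?_⟩
        rw [hh, cnt_g3b, cnt_id_pow, pow_add]
        norm_num
      · obtain ⟨h, hh⟩ := cnt_comb g3c (Equiv.refl (Fin s → F2))
        refine ⟨h, ?_⟩
        rw [hh, cnt_g3c, cnt_id_pow, pow_add]
        norm_num

end Assemble


/-- For `n > 2`, the set of `(n−1)`-affinities of permutations of `𝔽₂ⁿ` is exactly
`{ 2^i − 2 : 1 ≤ i ≤ n+1 }`. -/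
theorem spectrum_n_minus_one (n : ℕ) (hn : 2 < n) :
    {m : ℕ | ∃ f : Equiv.Perm (Fin n → ZMod 2),
        affinity (ZMod 2) (n - 1) (⇑f : (Fin n → ZMod 2) → (Fin n → ZMod 2)) = m}
      = {m : ℕ | ∃ i : ℕ, 1 ≤ i ∧ i ≤ n + 1 ∧ m = 2 ^ i - 2} := by
  have hfr : finrank F2 (Fin n → ZMod 2) = n := Module.finrank_fin_fun F2
  ext m
  simp only [Set.mem_setOf_eq]
  constructor
  · rintro ⟨f, rfl⟩
    have hb := f.bijective
    have hN : finrank F2 (Fin n → ZMod 2) ≠ 0 := by omega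
    obtain ⟨d, hd, hc⟩ := cnt_eq_pow hb
    rw [hfr] at hd
    have ha := affinity_eq hN hb
    rw [hfr] at ha
    refine ⟨d + 1, by omega, by omega, ?_⟩
    have h1 : 1 ≤ 2 ^ d := Nat.one_le_two_pow
    have h2 : 2 ^ (d + 1) = 2 ^ d * 2 := pow_succ 2 d
    rw [ha, hc]
    omega
  · rintro ⟨i, h1, h2, rfl⟩
    obtain ⟨f, hf⟩ := exists_cnt_pow n (i - 1) (by omega) (by omega)
    refine ⟨f, ?_⟩
    have hb := f.bijective
    have hN : finrank F2 (Fin n → ZMod 2) ≠ 0 := by omega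
    have ha := affinity_eq hN hb
    rw [hfr] at ha
    have h3 : 2 ^ i = 2 ^ (i - 1) * 2 := by
      rw [← pow_succ]
      congr 1
      omega
    have h4 : 1 ≤ 2 ^ (i - 1) := Nat.one_le_two_pow
    rw [ha]
    omega
end

section
/- Let g : F_2^n → F_2 be a function that is not affine (i.e., there are no a ∈ F_2^n and c ∈ F_2 with g(x) = ⟨a, x⟩ + c for all x; equivalently the algebraic degree of g is at least 2). Then Σ_{a ∈ F_2^n} ( Σ_{x ∈ F_2^n} (−1)^{g(x+a)+g(x)} )^2 ≤ 2^{2n} + (2^n − 1)(2^n − 4)^2, with equality if and only if there exists an affine function h : F_2^n → F_2 (h(x) = ⟨a, x⟩ + c) such that g and h differ at exactly one point of F_2^n. -/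
/-!
Write `W(α) = ∑ₓ (-1)^(g x + ⟨α, x⟩)` for the Walsh coefficients of `g` and `Δ(a)` for the inner
sums. Substituting `y = x + a` in `W(α)²` shows that `W(α)²` is the Walsh transform of `Δ`, so
Plancherel gives `∑_α W(α)⁴ = 2ⁿ ∑ₐ Δ(a)²`, while `∑_α W(α)² = 2²ⁿ`. Moreover
`±W(α) = 2ⁿ - 2 d`, where `d` is the Hamming distance from `g` to `x ↦ ⟨α, x⟩ + c`. If `g` is at
distance at least `2` from every affine function, then `W(α)² ≤ (2ⁿ - 4)²`, hence
`∑ₐ Δ(a)² ≤ 2ⁿ (2ⁿ - 4)²`, which is strictly below the bound. Otherwise `g` is an affine function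
plus the indicator of one point `u`; then `Δ(a) = ±(2ⁿ - 4)` for `a ≠ 0`, since only `x = u` and
`x = u + a` contribute a sign `-1`, and the bound is attained.
-/

open Finset

namespace BooleanFunction

def χ (s : ZMod 2) : ℤ := (-1) ^ s.val

lemma χ_add : ∀ s t : ZMod 2, χ (s + t) = χ s * χ t := by decide

lemma χ_sub : ∀ s t : ZMod 2, χ (s - t) = χ s * χ t := by decide

lemma χ_sq : ∀ s : ZMod 2, χ s ^ 2 = 1 := by decide

lemma χ_zero : χ 0 = 1 := rfl

lemma χ_one : χ 1 = -1 := rfl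

lemma eq_add_one_of_ne : ∀ {s t : ZMod 2}, s ≠ t → s = t + 1 := by decide

section HammingDist

variable {V : Type*} [Fintype V]

lemma sum_χ_add_eq_card_sub_hammingDist (f h : V → ZMod 2) :
    ∑ x, χ (f x + h x) = Fintype.card V - 2 * hammingDist f h := by
  have hsign : ∀ x, χ (f x + h x) = 1 - 2 * if f x ≠ h x then 1 else 0 := fun x => by
    generalize f x = s, h x = t
    revert s t
    decide
  simp only [hsign, sum_sub_distrib, ← mul_sum, sum_boole, hammingDist]
  simp

lemma ncard_setOf_ne (f h : V → ZMod 2) : {x | f x ≠ h x}.ncard = hammingDist f h := by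
  classical
  rw [Set.ncard_eq_toFinset_card', Set.toFinset_ofPred]
  rfl

lemma exists_eq_single_add_of_hammingDist_eq_one [DecidableEq V] {f h : V → ZMod 2}
    (hfh : hammingDist f h = 1) : ∃ u, f = Pi.single u 1 + h := by
  obtain ⟨u, hu⟩ := card_eq_one.mp hfh
  refine ⟨u, funext fun x => ?_⟩
  have hx : f x ≠ h x ↔ x = u := by simpa using Finset.ext_iff.mp hu x
  rw [Pi.add_apply, Pi.single_apply]
  split_ifs with hxu
  · rw [eq_add_one_of_ne (hx.mpr hxu), add_comm]
  · rw [zero_add]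
    exact not_not.mp (mt hx.mp hxu)

end HammingDist

variable {ι : Type*} [Fintype ι] [DecidableEq ι]

lemma card_pi_zmod_two : (Fintype.card (ι → ZMod 2) : ℤ) = 2 ^ Fintype.card ι := by simp

def affine (α : ι → ZMod 2) (c : ZMod 2) (x : ι → ZMod 2) : ZMod 2 := α ⬝ᵥ x + c

def walsh (F : (ι → ZMod 2) → ℤ) (α : ι → ZMod 2) : ℤ := ∑ x, χ (α ⬝ᵥ x) * F x

def autocorr (f : (ι → ZMod 2) → ZMod 2) (a : ι → ZMod 2) : ℤ := ∑ x, χ (f (x + a) + f x)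

lemma sum_χ_dotProduct (v : ι → ZMod 2) :
    ∑ α, χ (α ⬝ᵥ v) = if v = 0 then 2 ^ Fintype.card ι else 0 := by
  split_ifs with hv
  · simp [hv, χ_zero]
  obtain ⟨i, hi⟩ := Function.ne_iff.mp hv
  have hvi : v i = 1 := by simpa using eq_add_one_of_ne hi
  have hflip : ∀ α, χ ((α + Pi.single i 1) ⬝ᵥ v) = -χ (α ⬝ᵥ v) := fun α => by
    rw [add_dotProduct, single_dotProduct, one_mul, hvi, χ_add, χ_one, mul_neg_one]
  have hshift := Equiv.sum_comp (Equiv.addRight (Pi.single i 1)) fun α => χ (α ⬝ᵥ v)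
  simp only [Equiv.coe_addRight, hflip, sum_neg_distrib] at hshift
  linarith

lemma sum_χ_dotProduct_mul (a b : ι → ZMod 2) :
    ∑ α, χ (α ⬝ᵥ a) * χ (α ⬝ᵥ b) = if a = b then 2 ^ Fintype.card ι else 0 := by
  simp only [← χ_sub, ← dotProduct_sub, sum_χ_dotProduct, sub_eq_zero]

lemma sum_walsh_sq (F : (ι → ZMod 2) → ℤ) :
    ∑ α, walsh F α ^ 2 = 2 ^ Fintype.card ι * ∑ x, F x ^ 2 := by
  calc ∑ α, walsh F α ^ 2
      = ∑ α, ∑ x, ∑ y, F x * F y * (χ (α ⬝ᵥ x) * χ (α ⬝ᵥ y)) := by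
        refine sum_congr rfl fun α _ => ?_
        rw [sq, walsh, sum_mul_sum]
        exact sum_congr rfl fun x _ => sum_congr rfl fun y _ => by ring
    _ = ∑ x, ∑ y, F x * F y * ∑ α, χ (α ⬝ᵥ x) * χ (α ⬝ᵥ y) := by
        simp only [mul_sum]
        rw [sum_comm]
        exact sum_congr rfl fun x _ => sum_comm
    _ = 2 ^ Fintype.card ι * ∑ x, F x ^ 2 := by
        simp [sum_χ_dotProduct_mul, mul_sum, sq, mul_comm]

lemma walsh_sq_eq_walsh_autocorr (f : (ι → ZMod 2) → ZMod 2) (α : ι → ZMod 2) :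
    walsh (χ ∘ f) α ^ 2 = walsh (autocorr f) α := by
  rw [sq, walsh, sum_mul_sum, walsh]
  simp only [autocorr, mul_sum, Function.comp]
  conv_rhs => rw [sum_comm]
  refine sum_congr rfl fun x _ => ?_
  rw [← Equiv.sum_comp (Equiv.addLeft x)]
  refine sum_congr rfl fun a _ => ?_
  simp only [Equiv.coe_addLeft, dotProduct_add, χ_add]
  linear_combination χ (α ⬝ᵥ a) * χ (f x) * χ (f (x + a)) * χ_sq (α ⬝ᵥ x)

lemma sum_walsh_χ_sq (f : (ι → ZMod 2) → ZMod 2) :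
    ∑ α, walsh (χ ∘ f) α ^ 2 = 2 ^ (2 * Fintype.card ι) := by
  rw [sum_walsh_sq, pow_mul', sq]
  congr 1
  simp [χ_sq]

lemma sum_walsh_pow_four (f : (ι → ZMod 2) → ZMod 2) :
    ∑ α, walsh (χ ∘ f) α ^ 4 = 2 ^ Fintype.card ι * ∑ a, autocorr f a ^ 2 := by
  simp only [show 4 = 2 * 2 from rfl, pow_mul, walsh_sq_eq_walsh_autocorr]
  exact sum_walsh_sq _

lemma χ_mul_walsh (f : (ι → ZMod 2) → ZMod 2) (α : ι → ZMod 2) (c : ZMod 2) :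
    χ c * walsh (χ ∘ f) α = 2 ^ Fintype.card ι - 2 * hammingDist f (affine α c) := by
  rw [← card_pi_zmod_two, ← sum_χ_add_eq_card_sub_hammingDist, walsh, mul_sum]
  refine sum_congr rfl fun x _ => ?_
  simp only [affine, Function.comp, χ_add]
  ring

lemma walsh_sq_le {f : (ι → ZMod 2) → ZMod 2} {α : ι → ZMod 2}
    (hfar : ∀ c, 2 ≤ hammingDist f (affine α c)) :
    walsh (χ ∘ f) α ^ 2 ≤ (2 ^ Fintype.card ι - 4) ^ 2 := by
  have h0 := χ_mul_walsh f α 0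
  have h1 := χ_mul_walsh f α 1
  have d0 : (2 : ℤ) ≤ hammingDist f (affine α 0) := by exact_mod_cast hfar 0
  have d1 : (2 : ℤ) ≤ hammingDist f (affine α 1) := by exact_mod_cast hfar 1
  rw [χ_zero, one_mul] at h0
  rw [χ_one, neg_one_mul] at h1
  exact sq_le_sq' (by linarith) (by linarith)

lemma sum_autocorr_sq_le {f : (ι → ZMod 2) → ZMod 2}
    (hfar : ∀ α c, 2 ≤ hammingDist f (affine α c)) :
    ∑ a, autocorr f a ^ 2 ≤ 2 ^ Fintype.card ι * (2 ^ Fintype.card ι - 4) ^ 2 := by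
  refine le_of_mul_le_mul_left ?_ (by positivity : (0 : ℤ) < 2 ^ Fintype.card ι)
  calc 2 ^ Fintype.card ι * ∑ a, autocorr f a ^ 2
      = ∑ α, walsh (χ ∘ f) α ^ 2 * walsh (χ ∘ f) α ^ 2 := by
        simp only [← sum_walsh_pow_four, ← pow_add]
    _ ≤ ∑ α, (2 ^ Fintype.card ι - 4) ^ 2 * walsh (χ ∘ f) α ^ 2 :=
        sum_le_sum fun α _ => mul_le_mul_of_nonneg_right (walsh_sq_le (hfar α)) (sq_nonneg _)
    _ = 2 ^ Fintype.card ι * (2 ^ Fintype.card ι * (2 ^ Fintype.card ι - 4) ^ 2) := by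
        rw [← mul_sum, sum_walsh_χ_sq, pow_mul']
        ring

lemma sum_autocorr_sq_lt {f : (ι → ZMod 2) → ZMod 2}
    (hfar : ∀ α c, 2 ≤ hammingDist f (affine α c)) :
    ∑ a, autocorr f a ^ 2
      < 2 ^ (2 * Fintype.card ι) + (2 ^ Fintype.card ι - 1) * (2 ^ Fintype.card ι - 4) ^ 2 := by
  have h0 := χ_mul_walsh f 0 0
  have h1 := χ_mul_walsh f 0 1
  have d0 : (2 : ℤ) ≤ hammingDist f (affine 0 0) := by exact_mod_cast hfar 0 0
  have d1 : (2 : ℤ) ≤ hammingDist f (affine 0 1) := by exact_mod_cast hfar 0 1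
  rw [χ_zero, one_mul] at h0
  rw [χ_one, neg_one_mul] at h1
  -- the distances to the constants `0` and `1` add up to `2 ^ card ι`
  have hcard : (4 : ℤ) ≤ 2 ^ Fintype.card ι := by linarith
  have hle := sum_autocorr_sq_le hfar
  rw [pow_mul']
  nlinarith

lemma autocorr_zero (f : (ι → ZMod 2) → ZMod 2) : autocorr f 0 = 2 ^ Fintype.card ι := by
  simp [autocorr, ZModModule.add_self, χ_zero]

lemma autocorr_add_affine (f : (ι → ZMod 2) → ZMod 2) (α a : ι → ZMod 2) (c : ZMod 2) :
    autocorr (f + affine α c) a = χ (α ⬝ᵥ a) * autocorr f a := by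
  rw [autocorr, autocorr, mul_sum]
  refine sum_congr rfl fun x _ => ?_
  rw [← χ_add]
  congr 1
  simp only [Pi.add_apply, affine, dotProduct_add]
  linear_combination (α ⬝ᵥ x + c) * CharTwo.two_eq_zero (R := ZMod 2)

lemma autocorr_single (u a : ι → ZMod 2) (ha : a ≠ 0) :
    autocorr (Pi.single u (1 : ZMod 2)) a = 2 ^ Fintype.card ι - 4 := by
  have hpair : hammingDist (fun x => (Pi.single u 1 : (ι → ZMod 2) → ZMod 2) (x + a))
      (Pi.single u 1) = 2 := by
    refine card_eq_two.mpr ⟨u, u + a, by simpa using ha, ?_⟩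
    ext x
    have hxa : x + a = u ↔ x = u + a := by rw [← ZModModule.sub_eq_add u a, eq_sub_iff_add_eq]
    by_cases hxu : x = u <;> by_cases hxau : x = u + a <;>
      simp_all [Pi.single_apply]
  rw [autocorr, sum_χ_add_eq_card_sub_hammingDist, hpair, card_pi_zmod_two]
  ring

lemma sum_autocorr_sq_single_add_affine (u α : ι → ZMod 2) (c : ZMod 2) :
    ∑ a, autocorr (Pi.single u 1 + affine α c) a ^ 2
      = 2 ^ (2 * Fintype.card ι) + (2 ^ Fintype.card ι - 1) * (2 ^ Fintype.card ι - 4) ^ 2 := by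
  have hne : ∀ a ∈ ({0}ᶜ : Finset (ι → ZMod 2)),
      autocorr (Pi.single u 1 + affine α c) a ^ 2 = (2 ^ Fintype.card ι - 4) ^ 2 := by
    intro a ha
    rw [autocorr_add_affine, autocorr_single u a (by simpa using ha), mul_pow, χ_sq, one_mul]
  rw [Fintype.sum_eq_add_sum_compl 0, autocorr_zero, sum_congr rfl hne, sum_const, card_compl,
    card_singleton, nsmul_eq_mul, Nat.cast_sub Fintype.card_pos, card_pi_zmod_two, pow_mul']
  push_cast
  ring

end BooleanFunction

open BooleanFunction in
/-- For a non-affine Boolean function `g : 𝔽₂ⁿ → 𝔽₂`,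
`Σ_a (Σ_x (−1)^{g(x+a)+g(x)})² ≤ 2^{2n} + (2ⁿ−1)(2ⁿ−4)²`, with equality iff `g` differs
from some affine function `x ↦ ⟨a,x⟩ + c` at exactly one point. -/
theorem fourth_moment_bound (n : ℕ) (g : (Fin n → ZMod 2) → ZMod 2)
    (hg : ¬ ∃ (a : Fin n → ZMod 2) (c : ZMod 2), ∀ x, g x = (∑ i, a i * x i) + c) :
    (∑ a : Fin n → ZMod 2,
        (∑ x : Fin n → ZMod 2, (-1 : ℤ) ^ (g (x + a) + g x).val) ^ 2)
      ≤ 2 ^ (2 * n) + (2 ^ n - 1) * (2 ^ n - 4) ^ 2 ∧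
    ((∑ a : Fin n → ZMod 2,
        (∑ x : Fin n → ZMod 2, (-1 : ℤ) ^ (g (x + a) + g x).val) ^ 2)
      = 2 ^ (2 * n) + (2 ^ n - 1) * (2 ^ n - 4) ^ 2 ↔
      ∃ (a : Fin n → ZMod 2) (c : ZMod 2),
        ({x : Fin n → ZMod 2 | g x ≠ (∑ i, a i * x i) + c} : Set (Fin n → ZMod 2)).ncard = 1) := by
  have hdist : ∀ a c, ({x | g x ≠ (∑ i, a i * x i) + c} : Set (Fin n → ZMod 2)).ncard
      = hammingDist g (affine a c) := fun a c => ncard_setOf_ne g (affine a c)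
  simp only [hdist]
  change (∑ a, autocorr g a ^ 2 ≤ _) ∧ (∑ a, autocorr g a ^ 2 = _ ↔ _)
  by_cases hnear : ∃ a c, hammingDist g (affine a c) = 1
  · obtain ⟨α, c, hd⟩ := hnear
    obtain ⟨u, rfl⟩ := exists_eq_single_add_of_hammingDist_eq_one hd
    have heq := sum_autocorr_sq_single_add_affine u α c
    rw [Fintype.card_fin] at heq
    exact ⟨heq.le, iff_of_true heq ⟨α, c, hd⟩⟩
  · have hfar : ∀ α c, 2 ≤ hammingDist g (affine α c) := fun α c => by
      have hne : hammingDist g (affine α c) ≠ 0 := fun h =>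
        hg ⟨α, c, congrFun (hammingDist_eq_zero.mp h)⟩
      have hne_one : hammingDist g (affine α c) ≠ 1 := fun h => hnear ⟨α, c, h⟩
      omega
    have hlt := sum_autocorr_sq_lt hfar
    rw [Fintype.card_fin] at hlt
    exact ⟨hlt.le, iff_of_false hlt.ne hnear⟩
end
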